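/- The vector field A(ξ) = (1 + e^{−|ξ|²})ξ on ℝ^d is strongly monotone: there exists a constant c > 0 such that (A(ξ) − A(η)) · (ξ − η) ≥ c|ξ − η|² for all ξ, η ∈ ℝ^d. -/

import Mathlib

/-!
Write `A(ξ) = ψ(|ξ|) ξ` with `ψ t = 1 + e^{-t²}`. Expanding the inner product and using
Cauchy–Schwarz `⟪ξ, η⟫ ≤ |ξ| |η|` reduces `⟪A ξ - A η, ξ - η⟫ - c |ξ - η|²` to
`(a - b) (g a - g b)` with `a = |ξ|`, `b = |η|` and `g t = t ψ(t) - c t`, which is nonnegative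
as soon as `g` is monotone. For `c = 1/4`, `g' t = 3/4 + (1 - 2t²) e^{-t²} ≥ 0`.
-/

open RealInnerProductSpace Real Set

theorem mul_norm_sub_sq_le_inner_of_monotoneOn {E : Type*} [NormedAddCommGroup E]
    [InnerProductSpace ℝ E] {ψ : ℝ → ℝ} {c : ℝ} (hψ : ∀ t, 0 ≤ t → c ≤ ψ t)
    (hmono : MonotoneOn (fun t => t * ψ t - c * t) (Ici 0)) (x y : E) :
    c * ‖x - y‖ ^ 2 ≤ ⟪ψ ‖x‖ • x - ψ ‖y‖ • y, x - y⟫ := by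
  have hcs : ⟪x, y⟫ ≤ ‖x‖ * ‖y‖ := real_inner_le_norm x y
  have hsum : 0 ≤ ψ ‖x‖ + ψ ‖y‖ - 2 * c := by
    linarith [hψ _ (norm_nonneg x), hψ _ (norm_nonneg y)]
  have hmonovary : 0 ≤ (‖x‖ * ψ ‖x‖ - c * ‖x‖ - (‖y‖ * ψ ‖y‖ - c * ‖y‖)) * (‖x‖ - ‖y‖) :=
    (hmono.monovaryOn monotoneOn_id).sub_mul_sub_nonneg
      (mem_Ici.2 (norm_nonneg y)) (mem_Ici.2 (norm_nonneg x))
  have hexpand : ⟪ψ ‖x‖ • x - ψ ‖y‖ • y, x - y⟫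
      = ψ ‖x‖ * ‖x‖ ^ 2 - (ψ ‖x‖ + ψ ‖y‖) * ⟪x, y⟫ + ψ ‖y‖ * ‖y‖ ^ 2 := by
    simp only [inner_sub_left, inner_sub_right, real_inner_smul_left,
      real_inner_self_eq_norm_sq, real_inner_comm x y]
    ring
  rw [hexpand, norm_sub_sq_real]
  nlinarith [mul_nonneg hsum (sub_nonneg.2 hcs)]

theorem two_mul_sub_one_mul_exp_neg_le (u : ℝ) : (2 * u - 1) * exp (-u) ≤ 3 / 4 := by
  rcases le_or_gt u (1 / 2) with hu | hu
  · nlinarith [exp_pos (-u)]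
  · have hquad := quadratic_le_exp_of_nonneg (show 0 ≤ u by linarith)
    have hlin : 2 * u - 1 ≤ 3 / 4 * exp u := by nlinarith [sq_nonneg (u - 5 / 3)]
    calc (2 * u - 1) * exp (-u) ≤ 3 / 4 * exp u * exp (-u) :=
          mul_le_mul_of_nonneg_right hlin (exp_pos _).le
      _ = 3 / 4 := by rw [mul_assoc, ← exp_add, add_neg_cancel, exp_zero, mul_one]

theorem monotone_mul_one_add_exp_neg_sq_sub :
    Monotone (fun t : ℝ => t * (1 + exp (-t ^ 2)) - 1 / 4 * t) := by
  refine monotone_of_hasDerivAt_nonneg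
    (f' := fun t => 3 / 4 - (2 * t ^ 2 - 1) * exp (-t ^ 2)) (fun t => ?_)
    (fun t => sub_nonneg.2 (two_mul_sub_one_mul_exp_neg_le (t ^ 2)))
  have hexp : HasDerivAt (fun t : ℝ => exp (-t ^ 2)) (exp (-t ^ 2) * (-(2 * t))) t := by
    simpa using ((hasDerivAt_pow 2 t).neg).exp
  exact (((hasDerivAt_id' t).mul (hexp.const_add 1)).sub
    ((hasDerivAt_id' t).const_mul (1 / 4))).congr_deriv (by ring)

/-- The vector field `A(ξ) = (1 + e^{−|ξ|²})ξ` is strongly monotone: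
`(A(ξ) − A(η)) · (ξ − η) ≥ c|ξ − η|²` for some `c > 0`. -/
theorem A_strongly_monotone (d : ℕ) :
    ∃ c > 0, ∀ ξ η : EuclideanSpace ℝ (Fin d),
      c * ‖ξ - η‖ ^ 2
        ≤ ⟪(1 + Real.exp (-‖ξ‖ ^ 2)) • ξ - (1 + Real.exp (-‖η‖ ^ 2)) • η, ξ - η⟫ :=
  ⟨1 / 4, by norm_num, mul_norm_sub_sq_le_inner_of_monotoneOn (ψ := fun t => 1 + exp (-t ^ 2))
    (fun t _ => by linarith [exp_pos (-t ^ 2)]) (monotone_mul_one_add_exp_neg_sq_sub.monotoneOn _)⟩
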